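/- arXiv:0709.2512 — 2 statements merged into one kernel-verified Lean document; each statement's English description precedes it below -/
import Mathlib

section
/- Stability of subgroup filtrations: if for every class h the two size functions satisfy |S¹(h) − S²(h)| ≤ ε, and X¹, X² are the subgroup filtrations from optimal bases under S¹ and S², then dist(X¹, X²) ≤ ε. -/
/-!
Let `ψ²ⱼ` be the projection of `ψ¹ᵢ`. Since `h¹ᵢ ∈ ψ²ⱼ`, if `S¹(h¹ᵢ) > S²(h²ⱼ) + ε` then every
`h²ₖ` with `k ≤ j` would satisfy `S¹(h²ₖ) ≤ S²(h²ₖ) + ε < S¹(h¹ᵢ)`, so `h¹ᵢ` would lie in the span of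
classes strictly smaller than itself, against Fact 1. Conversely every `h¹ₖ` with `k ≤ i` has
`S²(h¹ₖ) ≤ S¹(h¹ᵢ) + ε =: t`, so by Fact 2 `ψ¹ᵢ` lies in the span of the `h²ₖ` with `S²(h²ₖ) ≤ t`;
if `S²(h²ⱼ) > t` these all have `k < j`, and `ψ¹ᵢ ⊆ ψ²ⱼ₋₁` contradicts the minimality of `j`.
-/

/-- The subgroup filtration associated to an ordered basis: `ψₙ = span(h₁,…,hₙ)`. -/
noncomputable def psiFilt {H : Type*} [AddCommGroup H] [Module (ZMod 2) H]
    {β : ℕ} (b : Module.Basis (Fin β) (ZMod 2) H) (n : ℕ) : Submodule (ZMod 2) H :=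
  Submodule.span (ZMod 2) (b '' {j : Fin β | (j : ℕ) < n})

open Submodule

section

variable {H : Type*} [AddCommGroup H] [Module (ZMod 2) H] {β : ℕ}
  {b c : Module.Basis (Fin β) (ZMod 2) H} {S T : H → ℝ} {ε : ℝ}

theorem psiFilt_le_iff {n : ℕ} {p : Submodule (ZMod 2) H} :
    psiFilt b n ≤ p ↔ ∀ k : Fin β, (k : ℕ) < n → b k ∈ p := by
  simp [psiFilt, span_le, Set.subset_def]

theorem self_mem_psiFilt_succ (i : Fin β) : b i ∈ psiFilt b (i + 1) :=
  subset_span ⟨i, Nat.lt_succ_self _, rfl⟩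

theorem psiFilt_eq_top : psiFilt b β = ⊤ := by
  rw [eq_top_iff, ← b.span_eq, span_le, Set.range_subset_iff]
  exact fun k => subset_span ⟨k, k.isLt, rfl⟩

theorem le_psiFilt_sInf (V : Submodule (ZMod 2) H) :
    V ≤ psiFilt b (sInf {n | V ≤ psiFilt b n}) :=
  Nat.sInf_mem (s := {n | V ≤ psiFilt b n}) ⟨β, by simp [psiFilt_eq_top]⟩

theorem span_image_le_psiFilt (hT : Monotone fun k => T (c k)) {t : ℝ} {j : Fin β}
    (htj : t < T (c j)) : span (ZMod 2) (c '' {k | T (c k) ≤ t}) ≤ psiFilt c j := by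
  refine span_mono (Set.image_mono fun k hk => ?_)
  by_contra hjk
  exact (hk.trans_lt htj).not_ge (hT (Fin.le_def.mpr (not_lt.mp hjk)))

theorem size_le_size_proj_add (hST : ∀ h, |S h - T h| ≤ ε) (hT : Monotone fun k => T (c k))
    {i j : Fin β} (hfact1 : b i ∉ span (ZMod 2) {h : H | h ≠ 0 ∧ S h < S (b i)})
    (hj : (j : ℕ) + 1 = sInf {n : ℕ | psiFilt b ((i : ℕ) + 1) ≤ psiFilt c n}) :
    S (b i) ≤ T (c j) + ε := by
  by_contra! hlt
  have hproj : b i ∈ psiFilt c (j + 1) := hj ▸ le_psiFilt_sInf _ (self_mem_psiFilt_succ i)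
  have hsmaller : psiFilt c (j + 1) ≤ span (ZMod 2) {h : H | h ≠ 0 ∧ S h < S (b i)} := by
    refine psiFilt_le_iff.mpr fun k hk => subset_span ⟨c.ne_zero k, ?_⟩
    have hkj : T (c k) ≤ T (c j) := hT (Fin.le_def.mpr (Nat.lt_succ_iff.mp hk))
    linarith [(abs_sub_le_iff.mp (hST (c k))).1]
  exact hfact1 (hsmaller hproj)

theorem size_proj_le_size_add (hST : ∀ h, |S h - T h| ≤ ε) (hS : Monotone fun k => S (b k))
    (hT : Monotone fun k => T (c k))
    (hfact2 : ∀ t : ℝ, {h : H | h ≠ 0 ∧ T h ≤ t} ⊆ ↑(span (ZMod 2) (c '' {k | T (c k) ≤ t})))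
    {i j : Fin β} (hj : (j : ℕ) + 1 = sInf {n : ℕ | psiFilt b ((i : ℕ) + 1) ≤ psiFilt c n}) :
    T (c j) ≤ S (b i) + ε := by
  by_contra! hlt
  have hspan : psiFilt b (i + 1) ≤ span (ZMod 2) (c '' {k | T (c k) ≤ S (b i) + ε}) := by
    refine psiFilt_le_iff.mpr fun k hk => hfact2 _ ⟨b.ne_zero k, ?_⟩
    have hki : S (b k) ≤ S (b i) := hS (Fin.le_def.mpr (Nat.lt_succ_iff.mp hk))
    linarith [(abs_sub_le_iff.mp (hST (b k))).2]
  have hsInf_le : (j : ℕ) + 1 ≤ j := hj ▸ Nat.sInf_le (hspan.trans (span_image_le_psiFilt hT hlt))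
  omega

theorem abs_size_sub_size_proj_le (hST : ∀ h, |S h - T h| ≤ ε) (hS : Monotone fun k => S (b k))
    (hT : Monotone fun k => T (c k))
    (hfact1 : ∀ i, b i ∉ span (ZMod 2) {h : H | h ≠ 0 ∧ S h < S (b i)})
    (hfact2 : ∀ t : ℝ, {h : H | h ≠ 0 ∧ T h ≤ t} ⊆ ↑(span (ZMod 2) (c '' {k | T (c k) ≤ t})))
    (i j : Fin β) (hj : (j : ℕ) + 1 = sInf {n : ℕ | psiFilt b ((i : ℕ) + 1) ≤ psiFilt c n}) :
    |S (b i) - T (c j)| ≤ ε :=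
  abs_sub_le_iff.mpr
    ⟨by linarith [size_le_size_proj_add hST hT (hfact1 i) hj],
      by linarith [size_proj_le_size_add hST hS hT hfact2 hj]⟩

end

/-- Stability of subgroup filtrations: if the two size functions are pointwise
within ε, and the two filtrations come from greedy-optimal sorted bases, then the
distance between the filtrations (max size difference between a subgroup and its
projection onto the other filtration) is at most ε. -/
theorem filtration_stability {H : Type*} [AddCommGroup H] [Module (ZMod 2) H] {β : ℕ}
    (S₁ S₂ : H → ℝ) (ε : ℝ)
    (hpt : ∀ h : H, |S₁ h - S₂ h| ≤ ε)
    (b₁ b₂ : Module.Basis (Fin β) (ZMod 2) H)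
    (hsort₁ : Monotone fun i => S₁ (b₁ i))
    (hsort₂ : Monotone fun i => S₂ (b₂ i))
    (hfact1₁ : ∀ j : Fin β,
      b₁ j ∉ Submodule.span (ZMod 2) {h : H | h ≠ 0 ∧ S₁ h < S₁ (b₁ j)})
    (hfact1₂ : ∀ j : Fin β,
      b₂ j ∉ Submodule.span (ZMod 2) {h : H | h ≠ 0 ∧ S₂ h < S₂ (b₂ j)})
    (hfact2₁ : ∀ t : ℝ, {h : H | h ≠ 0 ∧ S₁ h ≤ t} ⊆
      ↑(Submodule.span (ZMod 2) (b₁ '' {i : Fin β | S₁ (b₁ i) ≤ t})))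
    (hfact2₂ : ∀ t : ℝ, {h : H | h ≠ 0 ∧ S₂ h ≤ t} ⊆
      ↑(Submodule.span (ZMod 2) (b₂ '' {i : Fin β | S₂ (b₂ i) ≤ t}))) :
    (∀ i j : Fin β,
      (j : ℕ) + 1 = sInf {n : ℕ | psiFilt b₁ ((i : ℕ) + 1) ≤ psiFilt b₂ n} →
      |S₁ (b₁ i) - S₂ (b₂ j)| ≤ ε) ∧
    (∀ i j : Fin β,
      (j : ℕ) + 1 = sInf {n : ℕ | psiFilt b₂ ((i : ℕ) + 1) ≤ psiFilt b₁ n} →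
      |S₂ (b₂ i) - S₁ (b₁ j)| ≤ ε) :=
  ⟨abs_size_sub_size_proj_le hpt hsort₁ hsort₂ hfact1₁ hfact2₂,
    abs_size_sub_size_proj_le (fun h => abs_sub_comm (S₁ h) (S₂ h) ▸ hpt h) hsort₂ hsort₁
      hfact1₂ hfact2₁⟩
end

section
/- Lower bound half of filtration stability: with the hypotheses of the subgroup-filtration stability theorem, if ψ²ⱼ = proj(ψ¹ᵢ, X²), then S²(ψ²ⱼ) ≥ S¹(ψ¹ᵢ) − ε. -/
/-!
If `S²(ψ²ⱼ) < S¹(ψ¹ᵢ) − ε`, then every `h²ₘ` with `m ≤ j` has `S¹(h²ₘ) ≤ S²(h²ₘ) + ε < S¹(h¹ᵢ)`.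
Since `h¹ᵢ ∈ ψ¹ᵢ ⊆ ψ²ⱼ = span(h²₀, …, h²ⱼ)`, this puts `h¹ᵢ` in the span of nonzero classes of
strictly smaller `S¹`-size, contradicting Fact 1 for the first basis.
-/

namespace psiFilt

variable {H : Type*} [AddCommGroup H] [Module (ZMod 2) H] {β : ℕ}
  (b : Module.Basis (Fin β) (ZMod 2) H)

theorem apply_mem_succ (i : Fin β) : b i ∈ psiFilt b (i + 1) :=
  Submodule.subset_span ⟨i, Nat.lt_succ_self i, rfl⟩

theorem eq_top : psiFilt b β = ⊤ := by
  rw [psiFilt, Set.eq_univ_of_forall (s := {j : Fin β | (j : ℕ) < β}) Fin.isLt, Set.image_univ,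
    b.span_eq]

theorem le_sInf (V : Submodule (ZMod 2) H) :
    V ≤ psiFilt b (sInf {n : ℕ | V ≤ psiFilt b n}) :=
  Nat.sInf_mem (s := {n : ℕ | V ≤ psiFilt b n}) ⟨β, by simp [eq_top]⟩

theorem le_span_of_forall_lt {P : H → Prop} {n : ℕ} (hP : ∀ m : Fin β, (m : ℕ) < n → P (b m)) :
    psiFilt b n ≤ Submodule.span (ZMod 2) {h : H | h ≠ 0 ∧ P h} :=
  Submodule.span_mono <| by
    rintro _ ⟨m, hm, rfl⟩
    exact ⟨b.ne_zero m, hP m hm⟩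

end psiFilt

theorem filtration_stability_lower_general {H : Type*} [AddCommGroup H] [Module (ZMod 2) H] {β : ℕ}
    (S₁ S₂ : H → ℝ) (ε : ℝ)
    (hpt : ∀ h : H, |S₁ h - S₂ h| ≤ ε)
    (b₁ b₂ : Module.Basis (Fin β) (ZMod 2) H)
    (hsort₂ : Monotone fun i => S₂ (b₂ i))
    (hfact1₁ : ∀ j : Fin β,
      b₁ j ∉ Submodule.span (ZMod 2) {h : H | h ≠ 0 ∧ S₁ h < S₁ (b₁ j)}) :
    ∀ i j : Fin β,
      (j : ℕ) + 1 = sInf {n : ℕ | psiFilt b₁ ((i : ℕ) + 1) ≤ psiFilt b₂ n} →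
      S₁ (b₁ i) - ε ≤ S₂ (b₂ j) := by
  intro i j hj
  by_contra! hlt
  have hproj : psiFilt b₁ (i + 1) ≤ psiFilt b₂ (j + 1) :=
    hj ▸ psiFilt.le_sInf b₂ (psiFilt b₁ (i + 1))
  have hsmall : ∀ m : Fin β, (m : ℕ) < j + 1 → S₁ (b₂ m) < S₁ (b₁ i) := by
    intro m hm
    have hsorted : S₂ (b₂ m) ≤ S₂ (b₂ j) := hsort₂ (Fin.le_def.mpr (Nat.lt_succ_iff.mp hm))
    linarith [(abs_le.mp (hpt (b₂ m))).2]
  exact hfact1₁ i <|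
    psiFilt.le_span_of_forall_lt b₂ hsmall (hproj (psiFilt.apply_mem_succ b₁ i))

/-- Lower bound half of filtration stability: if `ψ²ⱼ` is the projection of
`ψ¹ᵢ` onto the second filtration, then `S²(ψ²ⱼ) ≥ S¹(ψ¹ᵢ) − ε`. -/
theorem filtration_stability_lower {H : Type*} [AddCommGroup H] [Module (ZMod 2) H] {β : ℕ}
    (S₁ S₂ : H → ℝ) (ε : ℝ)
    (hpt : ∀ h : H, |S₁ h - S₂ h| ≤ ε)
    (b₁ b₂ : Module.Basis (Fin β) (ZMod 2) H)
    (hsort₁ : Monotone fun i => S₁ (b₁ i))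
    (hsort₂ : Monotone fun i => S₂ (b₂ i))
    (hfact1₁ : ∀ j : Fin β,
      b₁ j ∉ Submodule.span (ZMod 2) {h : H | h ≠ 0 ∧ S₁ h < S₁ (b₁ j)})
    (hfact1₂ : ∀ j : Fin β,
      b₂ j ∉ Submodule.span (ZMod 2) {h : H | h ≠ 0 ∧ S₂ h < S₂ (b₂ j)})
    (hfact2₁ : ∀ t : ℝ, {h : H | h ≠ 0 ∧ S₁ h ≤ t} ⊆
      ↑(Submodule.span (ZMod 2) (b₁ '' {i : Fin β | S₁ (b₁ i) ≤ t})))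
    (hfact2₂ : ∀ t : ℝ, {h : H | h ≠ 0 ∧ S₂ h ≤ t} ⊆
      ↑(Submodule.span (ZMod 2) (b₂ '' {i : Fin β | S₂ (b₂ i) ≤ t}))) :
    ∀ i j : Fin β,
      (j : ℕ) + 1 = sInf {n : ℕ | psiFilt b₁ ((i : ℕ) + 1) ≤ psiFilt b₂ n} →
      S₁ (b₁ i) - ε ≤ S₂ (b₂ j) :=
  filtration_stability_lower_general S₁ S₂ ε hpt b₁ b₂ hsort₂ hfact1₁
end
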